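/- I.i.d. noise lower bound: On the complete graph on n nodes with path set all simple paths of fixed length L, the i.i.d. noise mechanism that reveals each edge independently with probability α has privacy satisfying Π ≥ 1 − 2(1−α)^L / n − (2/((L+1)(1−α)))·(1 − α^{L+1} − (1−α)^{L+1}), for α ∈ (0,1). -/

import Mathlib

open Finset

/-- Oriented edge set of a directed simple path of length `L` in the complete
graph, given by an injection of its `L+1` nodes. -/
def pedges {V : Type} [DecidableEq V] {L : ℕ} (f : Fin (L + 1) ↪ V) :
    Finset (V × V) :=
  (Finset.univ : Finset (Fin L)).image (fun i => (f i.castSucc, f i.succ))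

/-- The odd edges (1st, 3rd, 5th, ...) of the path. -/
def oddE {V : Type} [DecidableEq V] {L : ℕ} (f : Fin (L + 1) ↪ V) :
    Finset (V × V) :=
  ((Finset.univ : Finset (Fin L)).filter (fun i => i.val % 2 = 0)).image
    (fun i => (f i.castSucc, f i.succ))

/-- The even edges (2nd, 4th, ...) of the path. -/
def evenE {V : Type} [DecidableEq V] {L : ℕ} (f : Fin (L + 1) ↪ V) :
    Finset (V × V) :=
  ((Finset.univ : Finset (Fin L)).filter (fun i => i.val % 2 = 1)).image
    (fun i => (f i.castSucc, f i.succ))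

/-- An adversarial strategy: a distribution over nodes for each observation. -/
def ValidAdv {V : Type} [Fintype V] [DecidableEq V]
    (A : Finset (V × V) → V → ℝ) : Prop :=
  ∀ Q, (∀ v, 0 ≤ A Q v) ∧ (∑ v, A Q v) = 1


/-- Adversary success against the i.i.d. mechanism, which reveals each of the
L edges of the path independently with probability α:
Σ_{Q ⊆ P} α^{|Q|}(1−α)^{L−|Q|}·(A[s(P)|Q] + A[d(P)|Q]). -/
def iidSucc {V : Type} [Fintype V] [DecidableEq V] {L : ℕ} (α : ℝ)
    (A : Finset (V × V) → V → ℝ) (f : Fin (L + 1) ↪ V) : ℝ :=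
  ∑ Q ∈ (pedges f).powerset,
    α ^ Q.card * (1 - α) ^ (L - Q.card) * (A Q (f 0) + A Q (f (Fin.last L)))

/-- Privacy of the i.i.d. mechanism on the complete graph with paths all
directed simple paths of fixed length L. -/
noncomputable def iidPriv (V : Type) [Fintype V] [DecidableEq V] (L : ℕ)
    (α : ℝ) : ℝ :=
  1 - sSup { x : ℝ | ∃ A, ValidAdv A ∧
      x = sInf { y : ℝ | ∃ f : Fin (L + 1) ↪ V, y = iidSucc α A f } }

section Cyc

variable {V : Type} [DecidableEq V] (n L : ℕ) [NeZero n] (e : ZMod n ≃ V)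

/-- Node at position `k` of the `(L+1)`-cycle of nodes anchored at `r`. -/
def ggV (r : ZMod n) (k : ZMod (L + 1)) : V := e (r + (k.val : ZMod n))

/-- The `k`-th oriented edge of the `(L+1)`-cycle anchored at `r`. -/
def cyE (r : ZMod n) (k : ZMod (L + 1)) : V × V := (ggV n L e r k, ggV n L e r (k + 1))

lemma ggV_inj (hLn : L < n) (r : ZMod n) : Function.Injective (ggV n L e r) := by
  intro k k' h
  have h3 := add_left_cancel (e.injective h)
  have h4 : k.val = k'.val := by
    have := congrArg ZMod.val h3
    rwa [ZMod.val_cast_of_lt (lt_of_lt_of_le k.val_lt (by omega)),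
      ZMod.val_cast_of_lt (lt_of_lt_of_le k'.val_lt (by omega))] at this
  exact ZMod.val_injective _ h4

lemma cyE_inj (hLn : L < n) (r : ZMod n) : Function.Injective (cyE n L e r) := by
  intro k k' h
  exact ggV_inj n L e hLn r (congrArg Prod.fst h)

/-- The path embedding given by the window of the cycle starting at position `j`. -/
def pemb (hLn : L < n) (r : ZMod n) (j : ZMod (L + 1)) : Fin (L + 1) ↪ V :=
  ⟨fun i => ggV n L e r (j + ((i : ℕ) : ZMod (L + 1))), by
    intro i i' h
    have h3 := add_left_cancel (ggV_inj n L e hLn r h)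
    have h4 : (i : ℕ) = (i' : ℕ) := by
      have := congrArg ZMod.val h3
      rwa [ZMod.val_cast_of_lt i.isLt, ZMod.val_cast_of_lt i'.isLt] at this
    exact Fin.ext h4⟩

lemma pemb_zero (hLn : L < n) (r : ZMod n) (j : ZMod (L + 1)) :
    pemb n L e hLn r j 0 = ggV n L e r j := by
  show ggV n L e r (j + (((0 : Fin (L + 1)) : ℕ) : ZMod (L + 1))) = _
  simp

lemma pemb_last (hLn : L < n) (r : ZMod n) (j : ZMod (L + 1)) :
    pemb n L e hLn r j (Fin.last L) = ggV n L e r (j + (L : ZMod (L + 1))) := by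
  show ggV n L e r (j + (((Fin.last L : Fin (L + 1)) : ℕ) : ZMod (L + 1))) = _
  simp

lemma pedges_pemb (hLn : L < n) (r : ZMod n) (j : ZMod (L + 1)) :
    pedges (pemb n L e hLn r j)
      = (Finset.univ.image (cyE n L e r)).erase (cyE n L e r (j + (L : ZMod (L + 1)))) := by
  have hstep : ∀ i : Fin L,
      (pemb n L e hLn r j i.castSucc, pemb n L e hLn r j i.succ)
        = cyE n L e r (j + ((i : ℕ) : ZMod (L + 1))) := by
    intro i
    simp [pemb, cyE, ggV, Fin.coe_castSucc, Fin.val_succ, Nat.cast_add, Nat.cast_one, add_assoc]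
  have himg : Finset.image (fun i : Fin L => j + ((i : ℕ) : ZMod (L + 1))) Finset.univ
      = Finset.univ.erase (j + (L : ZMod (L + 1))) := by
    apply Finset.eq_of_subset_of_card_le
    · intro x hx
      obtain ⟨i, _, rfl⟩ := Finset.mem_image.mp hx
      refine Finset.mem_erase.mpr ⟨fun hc => ?_, Finset.mem_univ _⟩
      have h3 := add_left_cancel hc
      have := congrArg ZMod.val h3
      rw [ZMod.val_cast_of_lt (by omega : (i : ℕ) < L + 1),
        ZMod.val_cast_of_lt (by omega : L < L + 1)] at this
      omega
    · have hinj : Function.Injective (fun i : Fin L => j + ((i : ℕ) : ZMod (L + 1))) := by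
        intro i i' h
        have h3 := add_left_cancel h
        have := congrArg ZMod.val h3
        rw [ZMod.val_cast_of_lt (by omega : (i : ℕ) < L + 1),
          ZMod.val_cast_of_lt (by omega : (i' : ℕ) < L + 1)] at this
        exact Fin.ext this
      rw [Finset.card_image_of_injective _ hinj,
        Finset.card_erase_of_mem (Finset.mem_univ _)]
      simp [ZMod.card]
  calc pedges (pemb n L e hLn r j)
      = Finset.image (cyE n L e r)
          (Finset.image (fun i : Fin L => j + ((i : ℕ) : ZMod (L + 1))) Finset.univ) := by
        rw [Finset.image_image]
        exact Finset.image_congr (fun i _ => hstep i)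
    _ = _ := by
        rw [himg, Finset.image_erase (cyE_inj n L e hLn r)]

end Cyc

lemma iidSucc_pemb {V : Type} [Fintype V] [DecidableEq V] (n L : ℕ) [NeZero n]
    (e : ZMod n ≃ V) (hLn : L < n) (α : ℝ) (A : Finset (V × V) → V → ℝ)
    (r : ZMod n) (j : ZMod (L + 1)) :
    iidSucc α A (pemb n L e hLn r j)
      = ∑ Q ∈ (Finset.univ.image (cyE n L e r)).powerset,
          (if cyE n L e r (j + (L : ZMod (L + 1))) ∉ Q then
            α ^ Q.card * (1 - α) ^ (L - Q.card)
              * (A Q (ggV n L e r j) + A Q (ggV n L e r (j + (L : ZMod (L + 1))))) else 0) := by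
  unfold iidSucc
  rw [pedges_pemb, pemb_zero, pemb_last]
  have hpow : ((Finset.univ.image (cyE n L e r)).erase
        (cyE n L e r (j + (L : ZMod (L + 1))))).powerset
      = (Finset.univ.image (cyE n L e r)).powerset.filter
          (fun Q => cyE n L e r (j + (L : ZMod (L + 1))) ∉ Q) := by
    ext Q
    simp [Finset.subset_erase, and_comm]
  rw [hpow, Finset.sum_filter]

lemma sum_w_aux {β : Type*} [DecidableEq β] (L : ℕ) (E : Finset β) (hE : E.card = L + 1)
    (α : ℝ) (hα1 : α < 1) :
    ∑ Q ∈ (E.powerset.erase ∅).erase E, α ^ Q.card * (1 - α) ^ (L - Q.card)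
      = (1 - α ^ (L + 1) - (1 - α) ^ (L + 1)) / (1 - α) := by
  have h1α : (0:ℝ) < 1 - α := by linarith
  have hEne : E ≠ ∅ := by
    intro h; rw [h] at hE; simp at hE
  have h1 : ∑ Q ∈ E.powerset, α ^ Q.card * (1 - α) ^ (E.card - Q.card) = 1 := by
    have h := Finset.prod_add (fun _ : β => α) (fun _ : β => (1 - α)) E
    simp only [Finset.prod_const] at h
    have hL : ∀ Q ∈ E.powerset, α ^ Q.card * (1 - α) ^ (E.card - Q.card)
        = α ^ Q.card * (1 - α) ^ (E \ Q).card := by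
      intro Q hQ
      rw [Finset.card_sdiff_of_subset (Finset.mem_powerset.mp hQ)]
    rw [Finset.sum_congr rfl hL, ← h]
    simp
  rw [hE] at h1
  have hmemE : E ∈ E.powerset.erase ∅ :=
    Finset.mem_erase.mpr ⟨hEne, Finset.mem_powerset.mpr (Finset.Subset.refl E)⟩
  have h2 := Finset.add_sum_erase _ (fun Q => α ^ Q.card * (1 - α) ^ (L + 1 - Q.card)) hmemE
  have h3 := Finset.add_sum_erase _ (fun Q => α ^ Q.card * (1 - α) ^ (L + 1 - Q.card))
    (Finset.mem_powerset.mpr (Finset.empty_subset E) : (∅ : Finset β) ∈ E.powerset)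
  rw [← h3, ← h2] at h1
  simp only [Finset.card_empty, pow_zero, Nat.sub_zero, one_mul, hE, Nat.sub_self, pow_zero,
    mul_one] at h1
  have hrest : ∑ Q ∈ (E.powerset.erase ∅).erase E, α ^ Q.card * (1 - α) ^ (L + 1 - Q.card)
      = 1 - α ^ (L + 1) - (1 - α) ^ (L + 1) := by linarith
  rw [eq_div_iff (by linarith : (1:ℝ) - α ≠ 0), Finset.sum_mul, ← hrest]
  apply Finset.sum_congr rfl
  intro Q hQ
  have hQE : Q ⊂ E := by
    rw [Finset.ssubset_iff_subset_ne]
    have h4 := Finset.mem_erase.mp hQ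
    exact ⟨Finset.mem_powerset.mp (Finset.mem_erase.mp h4.2).2, h4.1⟩
  have hcard : Q.card < L + 1 := hE ▸ Finset.card_lt_card hQE
  rw [mul_assoc, ← pow_succ]
  congr 2
  omega

lemma exists_path_le {V : Type} [Fintype V] [DecidableEq V]
    (n L : ℕ) (hn : n = Fintype.card V) (hL : 1 ≤ L) (hLn : L < n)
    (α : ℝ) (hα0 : 0 < α) (hα1 : α < 1)
    (A : Finset (V × V) → V → ℝ) (hA : ValidAdv A) :
    ∃ f : Fin (L + 1) ↪ V, iidSucc α A f ≤
      2 * (1 - α) ^ L / n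
      + (2 / (((L : ℝ) + 1) * (1 - α))) * (1 - α ^ (L + 1) - (1 - α) ^ (L + 1)) := by
  haveI : NeZero n := ⟨by omega⟩
  have ecard : Fintype.card (ZMod n) = Fintype.card V := by rw [ZMod.card]; exact hn
  set e := Fintype.equivOfCardEq ecard with he
  have h1α : (0:ℝ) < 1 - α := by linarith
  have hn0 : (0:ℝ) < n := by exact_mod_cast Nat.pos_of_ne_zero (by omega)
  set X : ℝ := 1 - α ^ (L + 1) - (1 - α) ^ (L + 1) with hX
  set B : ℝ := 2 * (1 - α) ^ L / ↑n + 2 / (((L : ℝ) + 1) * (1 - α)) * X with hB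
  set Er : ZMod n → Finset (V × V) := fun r => Finset.univ.image (cyE n L e r) with hEr
  have hErcard : ∀ r, (Er r).card = L + 1 := by
    intro r
    rw [hEr]
    rw [Finset.card_image_of_injective _ (cyE_inj n L e hLn r), Finset.card_univ, ZMod.card]
  have hErmem : ∀ r j, cyE n L e r (j + (L : ZMod (L+1))) ∈ Er r := by
    intro r j
    exact Finset.mem_image_of_mem _ (Finset.mem_univ _)
  have hggsum : ∀ (Q : Finset (V × V)) (k : ZMod (L+1)),
      ∑ r : ZMod n, A Q (ggV n L e r k) = 1 := by
    intro Q k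
    have h := Equiv.sum_comp ((Equiv.addRight ((k.val : ZMod n))).trans e) (A Q)
    calc ∑ r : ZMod n, A Q (ggV n L e r k)
        = ∑ v : V, A Q v := h
      _ = 1 := (hA Q).2
  have hjsum : ∀ (Q : Finset (V × V)) (r : ZMod n) (c : ZMod (L+1)),
      ∑ j : ZMod (L + 1), A Q (ggV n L e r (j + c)) ≤ 1 := by
    intro Q r c
    have hinj : Function.Injective (fun j : ZMod (L+1) => ggV n L e r (j + c)) :=
      fun x y h => add_right_cancel (ggV_inj n L e hLn r h)
    calc ∑ j : ZMod (L + 1), A Q (ggV n L e r (j + c))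
        = ∑ v ∈ Finset.univ.image (fun j : ZMod (L+1) => ggV n L e r (j + c)), A Q v := by
          rw [Finset.sum_image (fun x _ y _ h => hinj h)]
      _ ≤ ∑ v : V, A Q v :=
          Finset.sum_le_sum_of_subset_of_nonneg (Finset.subset_univ _)
            (fun v _ _ => (hA Q).1 v)
      _ = 1 := (hA Q).2
  set w : ℕ → ℝ := fun q => α ^ q * (1 - α) ^ (L - q) with hw
  have hwpos : ∀ q, 0 ≤ w q := fun q =>
    mul_nonneg (pow_nonneg hα0.le q) (pow_nonneg h1α.le _)
  set G : ZMod n → Finset (V × V) → ℝ := fun r Q =>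
    ∑ j : ZMod (L + 1), (if cyE n L e r (j + (L : ZMod (L + 1))) ∉ Q then
      w Q.card * (A Q (ggV n L e r j) + A Q (ggV n L e r (j + (L : ZMod (L + 1))))) else 0)
    with hG
  have hsum1 : ∑ p : ZMod n × ZMod (L + 1), iidSucc α A (pemb n L e hLn p.1 p.2)
      = ∑ r : ZMod n, ∑ Q ∈ (Er r).powerset, G r Q := by
    rw [Fintype.sum_prod_type]
    apply Finset.sum_congr rfl
    intro r _
    calc ∑ j : ZMod (L+1), iidSucc α A (pemb n L e hLn r j)
        = ∑ j : ZMod (L+1), ∑ Q ∈ (Er r).powerset,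
            (if cyE n L e r (j + (L : ZMod (L + 1))) ∉ Q then
              w Q.card * (A Q (ggV n L e r j)
                + A Q (ggV n L e r (j + (L : ZMod (L + 1))))) else 0) :=
          Finset.sum_congr rfl fun j _ => iidSucc_pemb n L e hLn α A r j
      _ = ∑ Q ∈ (Er r).powerset, G r Q := Finset.sum_comm
  have hGEr : ∀ r, G r (Er r) = 0 := by
    intro r
    rw [hG]
    apply Finset.sum_eq_zero
    intro j _
    simp [hErmem r j]
  have hGbound : ∀ r Q, G r Q ≤ 2 * w Q.card := by
    intro r Q
    have h1 : G r Q ≤ ∑ j : ZMod (L+1),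
        w Q.card * (A Q (ggV n L e r j) + A Q (ggV n L e r (j + (L : ZMod (L + 1))))) := by
      rw [hG]
      apply Finset.sum_le_sum
      intro j _
      split
      · exact le_refl _
      · exact mul_nonneg (hwpos _) (add_nonneg ((hA Q).1 _) ((hA Q).1 _))
    have h2 : ∑ j : ZMod (L+1),
        w Q.card * (A Q (ggV n L e r j) + A Q (ggV n L e r (j + (L : ZMod (L + 1)))))
        = w Q.card * ((∑ j : ZMod (L+1), A Q (ggV n L e r j))
          + ∑ j : ZMod (L+1), A Q (ggV n L e r (j + (L : ZMod (L + 1))))) := by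
      rw [← Finset.mul_sum, Finset.sum_add_distrib]
    have h3 : ∑ j : ZMod (L+1), A Q (ggV n L e r j) ≤ 1 := by
      have h := hjsum Q r 0
      simpa using h
    have h4 := hjsum Q r ((L : ZMod (L+1)))
    calc G r Q ≤ _ := h1
      _ = _ := h2
      _ ≤ w Q.card * (1 + 1) := by
          apply mul_le_mul_of_nonneg_left _ (hwpos _)
          exact add_le_add h3 h4
      _ = 2 * w Q.card := by ring
  have hGrest : ∀ r : ZMod n, ∑ Q ∈ ((Er r).powerset.erase ∅).erase (Er r), G r Q
      ≤ 2 * (X / (1 - α)) := by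
    intro r
    calc ∑ Q ∈ ((Er r).powerset.erase ∅).erase (Er r), G r Q
        ≤ ∑ Q ∈ ((Er r).powerset.erase ∅).erase (Er r), 2 * w Q.card :=
          Finset.sum_le_sum fun Q _ => hGbound r Q
      _ = 2 * (X / (1 - α)) := by
          rw [← Finset.mul_sum, hw]
          rw [sum_w_aux L (Er r) (hErcard r) α hα1]
  have hsplit : ∀ r : ZMod n, ∑ Q ∈ (Er r).powerset, G r Q
      = G r ∅ + (G r (Er r) + ∑ Q ∈ ((Er r).powerset.erase ∅).erase (Er r), G r Q) := by
    intro r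
    have hEne : Er r ≠ ∅ := by
      intro h
      have := hErcard r
      rw [h] at this
      simp at this
    have hm1 : (∅ : Finset (V × V)) ∈ (Er r).powerset :=
      Finset.mem_powerset.mpr (Finset.empty_subset _)
    have hm2 : Er r ∈ (Er r).powerset.erase ∅ :=
      Finset.mem_erase.mpr ⟨hEne, Finset.mem_powerset.mpr (Finset.Subset.refl _)⟩
    rw [← Finset.add_sum_erase _ (G r) hm1, ← Finset.add_sum_erase _ (G r) hm2]
  have hGempty : ∑ r : ZMod n, G r ∅ = 2 * ((L:ℝ) + 1) * (1 - α) ^ L := by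
    calc ∑ r : ZMod n, G r ∅
        = ∑ r : ZMod n, ∑ j : ZMod (L+1), (1 - α) ^ L
            * (A ∅ (ggV n L e r j) + A ∅ (ggV n L e r (j + (L : ZMod (L + 1))))) := by
          apply Finset.sum_congr rfl
          intro r _
          rw [hG]
          simp [hw]
      _ = ∑ j : ZMod (L+1), ∑ r : ZMod n, (1 - α) ^ L
            * (A ∅ (ggV n L e r j) + A ∅ (ggV n L e r (j + (L : ZMod (L + 1))))) :=
          Finset.sum_comm
      _ = ∑ j : ZMod (L+1), (1 - α) ^ L * 2 := by
          apply Finset.sum_congr rfl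
          intro j _
          rw [← Finset.mul_sum, Finset.sum_add_distrib, hggsum ∅ j,
            hggsum ∅ (j + (L : ZMod (L+1)))]
          norm_num
      _ = 2 * ((L:ℝ) + 1) * (1 - α) ^ L := by
          rw [Finset.sum_const, Finset.card_univ, ZMod.card, nsmul_eq_mul]
          push_cast
          ring
  have key : ∑ p : ZMod n × ZMod (L + 1), iidSucc α A (pemb n L e hLn p.1 p.2)
      ≤ (↑n * ((L:ℝ) + 1)) * B := by
    calc ∑ p : ZMod n × ZMod (L + 1), iidSucc α A (pemb n L e hLn p.1 p.2)
        = ∑ r : ZMod n, ∑ Q ∈ (Er r).powerset, G r Q := hsum1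
      _ = ∑ r : ZMod n, (G r ∅
            + (G r (Er r) + ∑ Q ∈ ((Er r).powerset.erase ∅).erase (Er r), G r Q)) :=
          Finset.sum_congr rfl fun r _ => hsplit r
      _ = (∑ r : ZMod n, G r ∅) + ∑ r : ZMod n,
            (G r (Er r) + ∑ Q ∈ ((Er r).powerset.erase ∅).erase (Er r), G r Q) :=
          Finset.sum_add_distrib
      _ ≤ 2 * ((L:ℝ) + 1) * (1 - α) ^ L + ∑ r : ZMod n, (0 + 2 * (X / (1 - α))) := by
          apply add_le_add (le_of_eq hGempty)
          exact Finset.sum_le_sum fun r _ =>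
            add_le_add (le_of_eq (hGEr r)) (hGrest r)
      _ = 2 * ((L:ℝ) + 1) * (1 - α) ^ L + ↑n * (2 * (X / (1 - α))) := by
          rw [Finset.sum_const, Finset.card_univ, ZMod.card, nsmul_eq_mul]
          norm_num
      _ = (↑n * ((L:ℝ) + 1)) * B := by
          rw [hB]
          have hL1 : ((L:ℝ) + 1) ≠ 0 := by positivity
          field_simp
  have hne : (Finset.univ : Finset (ZMod n × ZMod (L + 1))).Nonempty :=
    Finset.univ_nonempty
  have hconst : ∑ _p : ZMod n × ZMod (L + 1), B = (↑n * ((L:ℝ) + 1)) * B := by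
    rw [Finset.sum_const, Finset.card_univ, Fintype.card_prod, ZMod.card, ZMod.card,
      nsmul_eq_mul]
    push_cast
    ring
  obtain ⟨p, _, hp⟩ := Finset.exists_le_of_sum_le hne (le_trans key hconst.ge)
  exact ⟨pemb n L e hLn p.1 p.2, hp⟩

lemma iidSucc_nonneg {V : Type} [Fintype V] [DecidableEq V] {L : ℕ} (α : ℝ)
    (hα0 : 0 < α) (hα1 : α < 1) (A : Finset (V × V) → V → ℝ) (hA : ValidAdv A)
    (f : Fin (L + 1) ↪ V) : 0 ≤ iidSucc α A f := by
  apply Finset.sum_nonneg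
  intro Q _
  have h1α : (0:ℝ) ≤ 1 - α := by linarith
  exact mul_nonneg (mul_nonneg (pow_nonneg hα0.le _) (pow_nonneg h1α _))
    (add_nonneg ((hA Q).1 _) ((hA Q).1 _))

/-- I.i.d. noise lower bound: on the complete graph on n nodes with paths all
simple paths of fixed length L, the i.i.d. mechanism with per-edge reveal
probability α ∈ (0,1) satisfies
Π ≥ 1 − 2(1−α)^L/n − (2/((L+1)(1−α)))·(1 − α^{L+1} − (1−α)^{L+1}). -/
theorem iid_noise_lower_bound
    {V : Type} [Fintype V] [DecidableEq V]
    (n L : ℕ) (hn : n = Fintype.card V) (hL : 1 ≤ L) (hLn : L < n)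
    (α : ℝ) (hα0 : 0 < α) (hα1 : α < 1) :
    1 - 2 * (1 - α) ^ L / n
      - (2 / (((L : ℝ) + 1) * (1 - α))) * (1 - α ^ (L + 1) - (1 - α) ^ (L + 1))
      ≤ iidPriv V L α := by
  have h1α : (0:ℝ) < 1 - α := by linarith
  have hn0 : (0:ℝ) < n := by exact_mod_cast Nat.pos_of_ne_zero (by omega)
  set B : ℝ := 2 * (1 - α) ^ L / n
      + (2 / (((L : ℝ) + 1) * (1 - α))) * (1 - α ^ (L + 1) - (1 - α) ^ (L + 1)) with hBdef
  have hBnn : 0 ≤ B := by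
    have hX : 0 ≤ 1 - α ^ (L + 1) - (1 - α) ^ (L + 1) := by
      have h1 : α ^ (L + 1) ≤ α := pow_le_of_le_one hα0.le hα1.le (by omega)
      have h2 : (1 - α) ^ (L + 1) ≤ 1 - α := pow_le_of_le_one h1α.le (by linarith) (by omega)
      linarith
    have hA : 0 ≤ 2 * (1 - α) ^ L / (n:ℝ) := by positivity
    have hB2 : 0 ≤ (2 / (((L : ℝ) + 1) * (1 - α)))
        * (1 - α ^ (L + 1) - (1 - α) ^ (L + 1)) := by
      apply mul_nonneg _ hX
      positivity
    rw [hBdef]; linarith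
  have hsup : sSup { x : ℝ | ∃ A, ValidAdv A ∧
      x = sInf { y : ℝ | ∃ f : Fin (L + 1) ↪ V, y = iidSucc α A f } } ≤ B := by
    apply Real.sSup_le _ hBnn
    rintro x ⟨A, hvA, rfl⟩
    obtain ⟨f, hf⟩ := exists_path_le n L hn hL hLn α hα0 hα1 A hvA
    have hbdd : BddBelow { y : ℝ | ∃ f : Fin (L + 1) ↪ V, y = iidSucc α A f } := by
      refine ⟨0, ?_⟩
      rintro y ⟨g, rfl⟩
      exact iidSucc_nonneg α hα0 hα1 A hvA g
    exact le_trans (csInf_le hbdd ⟨f, rfl⟩) hf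
  unfold iidPriv
  rw [hBdef] at hsup
  linarith
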